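/- arXiv:2510.12576 — 5 statements merged into one kernel-verified Lean document; each statement's English description precedes it below -/
import Mathlib

section
/- For every integer k ≥ 4 and every real number x ≥ 2/(k-3), the inequality (x/(x+1) - 1/2)^2 ≤ (k-3)/(k-1)^3 · x + (k-3)(k^2-8k+11)/(4(k-1)^3) holds. -/
theorem stmt_0 (k : ℤ) (hk : 4 ≤ k) (x : ℝ) (hx : 2 / ((k : ℝ) - 3) ≤ x) :
    (x / (x + 1) - 1 / 2) ^ 2 ≤
      ((k : ℝ) - 3) / ((k : ℝ) - 1) ^ 3 * x +
        ((k : ℝ) - 3) * ((k : ℝ) ^ 2 - 8 * k + 11) / (4 * ((k : ℝ) - 1) ^ 3) := by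
  have hk' : (4:ℝ) ≤ (k:ℝ) := by exact_mod_cast hk
  set t := (k:ℝ) with ht
  have h3 : 0 < t - 3 := by linarith
  have h1 : 2 ≤ (t - 3) * x := by
    rw [div_le_iff₀ h3] at hx; linarith [hx]
  have hxpos : 0 < x := by nlinarith
  have hx1 : 0 < x + 1 := by linarith
  have h13 : (t - 1) ≠ 0 := by nlinarith
  have key : ((t-3)/(t-1)^3 * x + (t-3)*(t^2-8*t+11)/(4*(t-1)^3)) - (x/(x+1)-1/2)^2
      = (((t-3)*x - 2) * (4 * (x - (t-2))^2))
        / (4*(x+1)^2*(t-1)^3) := by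
    field_simp
    ring
  have hnum : 0 ≤ ((t-3)*x - 2) * (4 * (x - (t-2))^2) :=
    mul_nonneg (by linarith) (by positivity)
  have hden : 0 < 4*(x+1)^2*(t-1)^3 :=
    mul_pos (by positivity) (pow_pos (by linarith) 3)
  nlinarith [key, div_nonneg hnum hden.le]
end

section
/- Let k ≥ 2 be an integer and let D be a finite simple digraph (no loops, at most one arc in each direction between any two vertices) on n vertices containing no transitive tournament on k vertices as a subdigraph. For each vertex v let m(v) = max(outdegree(v), indegree(v))/n. Then the sum over all vertices v of m(v)/(1 - m(v)) is at most (k-2)·n. -/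
open Finset

section Aux

variable {V : Type*} [Fintype V] [DecidableEq V]

noncomputable def dg (D : V → V → Prop) (v : V) : ℕ :=
  max (@card _ (@filter _ (fun w => D v w) (Classical.decPred _) univ))
      (@card _ (@filter _ (fun w => D w v) (Classical.decPred _) univ))

omit [DecidableEq V] in
lemma dg_eq (D : V → V → Prop) [DecidableRel D] (v : V) :
    dg D v = max (univ.filter fun w => D v w).card (univ.filter fun w => D w v).card := by
  unfold dg
  congr 1 <;> rw [Finset.filter_congr_decidable]

lemma dg_lt (D : V → V → Prop) (hirr : Irreflexive D) (v : V) :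
    dg D v < Fintype.card V := by
  classical
  rw [dg_eq D v]
  have h1 : (univ.filter fun w => D v w) ⊆ univ.erase v := by
    intro w hw
    simp only [mem_filter, mem_univ, true_and] at hw
    exact mem_erase.2 ⟨fun h => hirr v (h ▸ hw), mem_univ _⟩
  have h2 : (univ.filter fun w => D w v) ⊆ univ.erase v := by
    intro w hw
    simp only [mem_filter, mem_univ, true_and] at hw
    exact mem_erase.2 ⟨fun h => hirr v (h ▸ hw), mem_univ _⟩
  have hv : (univ.erase v).card < Fintype.card V := by
    rw [card_erase_of_mem (mem_univ v), ← Finset.card_univ]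
    exact Nat.pred_lt (card_pos.2 ⟨v, mem_univ v⟩).ne'
  exact lt_of_le_of_lt (max_le (card_le_card h1) (card_le_card h2)) hv

omit [Fintype V] [DecidableEq V] in
lemma flip_free {k : ℕ} (D : V → V → Prop)
    (hfree : ¬ ∃ f : Fin k → V, Function.Injective f ∧ ∀ i j : Fin k, i < j → D (f i) (f j)) :
    ¬ ∃ f : Fin k → V, Function.Injective f ∧ ∀ i j : Fin k, i < j → D (f j) (f i) := by
  rintro ⟨f, hinj, htr⟩
  refine hfree ⟨f ∘ Fin.rev, hinj.comp Fin.rev_injective, fun i j hij => ?_⟩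
  exact htr j.rev i.rev (by simpa using Fin.rev_lt_rev.2 hij)

omit [DecidableEq V] in
lemma dg_flip (D : V → V → Prop) (v : V) :
    dg (fun a b => D b a) v = dg D v := by
  simp [dg, max_comm]

lemma card_filter_subtype (S : Finset V) (P : V → Prop) [DecidablePred P] :
    (univ.filter fun w : {x // x ∈ S} => P ↑w).card = (S.filter P).card := by
  rw [univ_eq_attach, filter_attach, card_map, card_attach]

lemma deg_split (S : Finset V) (P : V → Prop) [DecidablePred P] :
    (univ.filter P).card ≤ (S.filter P).card + Sᶜ.card := by
  refine le_trans (card_le_card ?_) (card_union_le _ _)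
  intro w hw
  simp only [mem_filter, mem_univ, true_and] at hw
  by_cases h : w ∈ S
  · exact mem_union_left _ (mem_filter.2 ⟨h, hw⟩)
  · exact mem_union_right _ (mem_compl.2 h)

end Aux

universe u

lemma step_core (k : ℕ)
    (ih : ∀ (W : Type u) [Fintype W] [DecidableEq W] (E : W → W → Prop) [DecidableRel E],
      Irreflexive E →
      (¬ ∃ f : Fin k → W, Function.Injective f ∧ ∀ i j : Fin k, i < j → E (f i) (f j)) →
      ∑ u : W, (1 : ℝ) / ((Fintype.card W : ℝ) - dg E u) ≤ (k : ℝ) - 1)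
    {V : Type u} [Fintype V] [DecidableEq V] (D : V → V → Prop) [inst : DecidableRel D]
    (hirr : Irreflexive D)
    (hfree : ¬ ∃ f : Fin (k + 1) → V, Function.Injective f ∧
      ∀ i j : Fin (k + 1), i < j → D (f i) (f j))
    (v : V) (hv : ∀ u : V, dg D u ≤ dg D v)
    (hout : dg D v = (univ.filter fun w => D v w).card) :
    ∑ u : V, (1 : ℝ) / ((Fintype.card V : ℝ) - dg D u) ≤ ((k : ℝ) + 1) - 1 := by
  set n := Fintype.card V with hn
  set S : Finset V := univ.filter fun w => D v w with hS
  have hScard : S.card = dg D v := hout.symm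
  have hmemS : ∀ w, w ∈ S ↔ D v w := by intro w; simp [hS]
  -- the induced digraph on S
  set T := {x : V // x ∈ S}
  set E : T → T → Prop := fun a b => D ↑a ↑b with hE
  letI instE : DecidableRel E := fun a b => inst ↑a ↑b
  have hirrE : Irreflexive E := fun a => hirr ↑a
  have hcardT : Fintype.card T = S.card := Fintype.card_coe S
  -- S is T_k-free
  have hfreeE : ¬ ∃ f : Fin k → T, Function.Injective f ∧ ∀ i j : Fin k, i < j → E (f i) (f j) := by
    rintro ⟨f, finj, ftr⟩
    apply hfree
    refine ⟨Fin.cons v (fun i => ↑(f i)), ?_, ?_⟩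
    · rw [Fin.cons_injective_iff]
      refine ⟨?_, fun a b hab => finj (Subtype.ext hab)⟩
      rintro ⟨i, hi⟩
      have hi' : (↑(f i) : V) = v := hi
      have hm : (↑(f i) : V) ∈ S := (f i).2
      rw [hi'] at hm
      exact hirr v ((hmemS v).1 hm)
    · intro i j hij
      rcases Fin.eq_zero_or_eq_succ i with rfl | ⟨i', rfl⟩
      · rcases Fin.eq_zero_or_eq_succ j with rfl | ⟨j', rfl⟩
        · exact absurd hij (lt_irrefl _)
        · simp only [Fin.cons_zero, Fin.cons_succ]
          exact (hmemS _).1 (f j').2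
      · rcases Fin.eq_zero_or_eq_succ j with rfl | ⟨j', rfl⟩
        · exact absurd hij (Fin.not_lt_zero _)
        · simp only [Fin.cons_succ]
          exact ftr i' j' (Fin.succ_lt_succ_iff.1 hij)
  have hIH := ih T E hirrE hfreeE
  -- degree comparison
  have hdeg : ∀ u : T, dg D ↑u ≤ dg E u + Sᶜ.card := by
    intro u
    have e1 : dg D (↑u : V) = max (univ.filter fun w => D ↑u w).card
        (univ.filter fun w => D w ↑u).card := dg_eq D ↑u
    have e2 : dg E u = max (univ.filter fun w : T => E u w).card
        (univ.filter fun w : T => E w u).card := dg_eq E u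
    have s1 : (univ.filter fun w => D ↑u w).card ≤
        (S.filter fun w => D ↑u w).card + Sᶜ.card := deg_split S _
    have s2 : (univ.filter fun w => D w ↑u).card ≤
        (S.filter fun w => D w ↑u).card + Sᶜ.card := deg_split S _
    have c1 : (univ.filter fun w : T => E u w).card = (S.filter fun w => D ↑u w).card :=
      card_filter_subtype S (fun w => D ↑u w)
    have c2 : (univ.filter fun w : T => E w u).card = (S.filter fun w => D w ↑u).card :=
      card_filter_subtype S (fun w => D w ↑u)
    omega
  have hSle : S.card ≤ n := by rw [hn, ← Finset.card_univ]; exact card_le_card (subset_univ S)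
  have hcompl : (Sᶜ.card : ℝ) = (n : ℝ) - S.card := by
    rw [card_compl, ← hn, Nat.cast_sub hSle]
  -- termwise bound on S
  have hterm : ∀ u : T, (1 : ℝ) / ((n : ℝ) - dg D ↑u) ≤
      (1 : ℝ) / ((Fintype.card T : ℝ) - dg E u) := by
    intro u
    have h1 : (dg E u : ℝ) < Fintype.card T := by exact_mod_cast dg_lt E hirrE u
    have h2 : (dg D (↑u : V) : ℝ) ≤ (dg E u : ℝ) + Sᶜ.card := by exact_mod_cast hdeg u
    have h3 : (0 : ℝ) < (Fintype.card T : ℝ) - dg E u := by linarith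
    apply one_div_le_one_div_of_le h3
    rw [hcardT] at *
    linarith [hcompl]
  -- split the sum
  have hsplit : ∑ u ∈ S, (1 : ℝ) / ((n : ℝ) - dg D u) +
      ∑ u ∈ Sᶜ, (1 : ℝ) / ((n : ℝ) - dg D u) = ∑ u : V, (1 : ℝ) / ((n : ℝ) - dg D u) :=
    Finset.sum_add_sum_compl S _
  have hvpos : (0 : ℝ) < (n : ℝ) - dg D v := by
    have h := dg_lt D hirr v
    have h' : (dg D v : ℝ) < n := by exact_mod_cast h
    linarith
  have hSsum : ∑ u ∈ S, (1 : ℝ) / ((n : ℝ) - dg D u) ≤ (k : ℝ) - 1 := by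
    rw [← Finset.sum_coe_sort S]
    calc ∑ u : T, (1 : ℝ) / ((n : ℝ) - dg D ↑u)
        ≤ ∑ u : T, (1 : ℝ) / ((Fintype.card T : ℝ) - dg E u) :=
          Finset.sum_le_sum fun u _ => hterm u
      _ ≤ (k : ℝ) - 1 := hIH
  have hCsum : ∑ u ∈ Sᶜ, (1 : ℝ) / ((n : ℝ) - dg D u) ≤ 1 := by
    have hb : ∀ u ∈ Sᶜ, (1 : ℝ) / ((n : ℝ) - dg D u) ≤ 1 / ((n : ℝ) - dg D v) := by
      intro u _
      apply one_div_le_one_div_of_le hvpos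
      have h := hv u
      have h' : (dg D u : ℝ) ≤ dg D v := by exact_mod_cast h
      linarith
    calc ∑ u ∈ Sᶜ, (1 : ℝ) / ((n : ℝ) - dg D u)
        ≤ Sᶜ.card • (1 / ((n : ℝ) - dg D v)) := Finset.sum_le_card_nsmul _ _ _ hb
      _ = ((n : ℝ) - dg D v) * (1 / ((n : ℝ) - dg D v)) := by
          rw [nsmul_eq_mul, hcompl, hScard]
      _ = 1 := mul_one_div_cancel hvpos.ne'
  linarith

lemma key (k : ℕ) : ∀ (V : Type u) [Fintype V] [DecidableEq V] (D : V → V → Prop)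
    [DecidableRel D], Irreflexive D →
    (¬ ∃ f : Fin k → V, Function.Injective f ∧ ∀ i j : Fin k, i < j → D (f i) (f j)) →
    ∑ u : V, (1 : ℝ) / ((Fintype.card V : ℝ) - dg D u) ≤ (k : ℝ) - 1 := by
  induction k with
  | zero =>
    intro V _ _ D _ hirr hfree
    exact absurd ⟨Fin.elim0, fun a => a.elim0, fun i => i.elim0⟩ hfree
  | succ k ih =>
    intro V _ _ D instD hirr hfree
    have hgoal : ((k + 1 : ℕ) : ℝ) - 1 = ((k : ℝ) + 1) - 1 := by push_cast; ring
    rw [hgoal]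
    cases isEmpty_or_nonempty V with
    | inl h =>
      rw [Finset.univ_eq_empty, Finset.sum_empty]
      have : (0 : ℝ) ≤ (k : ℝ) := Nat.cast_nonneg k
      linarith
    | inr h =>
      obtain ⟨v, -, hv⟩ := Finset.exists_max_image univ (dg D) univ_nonempty
      rcases le_total (univ.filter fun w => D w v).card (univ.filter fun w => D v w).card
        with hle | hle
      · refine step_core k ih D hirr hfree v (fun u => hv u (mem_univ u)) ?_
        rw [dg_eq D v]
        exact max_eq_left hle
      · set D' : V → V → Prop := fun a b => D b a with hD'
        letI instD' : DecidableRel D' := fun a b => instD b a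
        have hres := step_core k ih D' (fun a ha => hirr a ha) (flip_free D hfree) v
          (fun u => by
            have e1 : dg D' u = dg D u := dg_flip D u
            have e2 : dg D' v = dg D v := dg_flip D v
            rw [e1, e2]; exact hv u (mem_univ u))
          (by
            have e2 : dg D' v = dg D v := dg_flip D v
            have h3 : dg D v = (univ.filter fun w => D w v).card := by
              rw [dg_eq D v]; exact max_eq_right hle
            exact e2.trans h3)
        calc ∑ u : V, (1 : ℝ) / ((Fintype.card V : ℝ) - dg D u)
            = ∑ u : V, (1 : ℝ) / ((Fintype.card V : ℝ) - dg D' u) := by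
              refine Finset.sum_congr rfl fun u _ => ?_
              exact congrArg (fun x : ℕ => (1:ℝ) / ((Fintype.card V : ℝ) - x)) (dg_flip D u).symm
          _ ≤ ((k : ℝ) + 1) - 1 := hres

open Finset in
theorem stmt_6 {V : Type*} [Fintype V] [DecidableEq V] (k : ℕ) (hk : 2 ≤ k)
    (D : V → V → Prop) [DecidableRel D] (hirr : Irreflexive D)
    (hfree : ¬ ∃ f : Fin k → V, Function.Injective f ∧ ∀ i j : Fin k, i < j → D (f i) (f j)) :
    ∑ v : V,
        (fun m : ℝ => m / (1 - m))
          ((max (univ.filter fun w => D v w).card (univ.filter fun w => D w v).card : ℝ) /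
            (Fintype.card V : ℝ)) ≤
      ((k : ℝ) - 2) * (Fintype.card V : ℝ) := by
  cases isEmpty_or_nonempty V with
  | inl h =>
    rw [Finset.univ_eq_empty, Finset.sum_empty]
    simp [Fintype.card_eq_zero]
  | inr h =>
    have hn : (0 : ℝ) < (Fintype.card V : ℝ) := by exact_mod_cast Fintype.card_pos
    set n : ℝ := (Fintype.card V : ℝ) with hnd
    have hterm : ∀ v : V,
        (fun m : ℝ => m / (1 - m))
          ((max (univ.filter fun w => D v w).card (univ.filter fun w => D w v).card : ℝ) / n)
        = n * (1 / (n - dg D v)) - 1 := by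
      intro v
      have hd : (dg D v : ℝ) < n := by rw [hnd]; exact_mod_cast dg_lt D hirr v
      have h1 : n - (dg D v : ℝ) ≠ 0 := by linarith
      have h2 : n ≠ 0 := hn.ne'
      have hcast : (max (univ.filter fun w => D v w).card (univ.filter fun w => D w v).card : ℝ)
          = (dg D v : ℝ) := by rw [dg_eq D v]; push_cast; ring
      simp only [hcast]
      have h3 : 1 - (dg D v : ℝ) / n = (n - dg D v) / n := by field_simp
      rw [h3]
      field_simp
      ring
    rw [Finset.sum_congr rfl fun v _ => hterm v]
    rw [Finset.sum_sub_distrib, Finset.sum_const, ← Finset.mul_sum]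
    have hkey := key k V D hirr hfree
    have hsum : n * (∑ u : V, (1 : ℝ) / (n - dg D u)) ≤ n * ((k : ℝ) - 1) :=
      mul_le_mul_of_nonneg_left hkey hn.le
    have hcard : ((univ : Finset V).card • (1 : ℝ)) = n := by
      rw [nsmul_eq_mul, mul_one, hnd]; norm_cast
    rw [hcard]
    nlinarith
end

section
/- For every integer k ≥ 4, define on reals x ≥ 2/(k-3) the substitution m = x/(x+1), i.e., x = m/(1-m) for m ∈ [2/(k-1), 1). Then for every real m with 2/(k-1) ≤ m < 1, (m - 1/2)^2 ≤ (k-3)/(k-1)^3 · m/(1-m) + (k-3)(k^2-8k+11)/(4(k-1)^3). -/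
theorem stmt_8 (k : ℤ) (hk : 4 ≤ k) (m : ℝ) (hm1 : 2 / ((k : ℝ) - 1) ≤ m) (hm2 : m < 1) :
    (m - 1 / 2) ^ 2 ≤
      ((k : ℝ) - 3) / ((k : ℝ) - 1) ^ 3 * (m / (1 - m)) +
        ((k : ℝ) - 3) * ((k : ℝ) ^ 2 - 8 * k + 11) / (4 * ((k : ℝ) - 1) ^ 3) := by
  set c : ℝ := (k : ℝ) with hc
  have hc4 : (4 : ℝ) ≤ c := by rw [hc]; exact_mod_cast hk
  have hc1 : (0 : ℝ) < c - 1 := by linarith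
  have hs : (0 : ℝ) < 1 - m := by linarith
  have ht : 0 ≤ m * (c - 1) - 2 := by
    have := (div_le_iff₀ hc1).mp hm1
    linarith
  have hD : (0 : ℝ) < (1 - m) * (4 * (c - 1) ^ 3) := by positivity
  have hgoal : (c - 3) / (c - 1) ^ 3 * (m / (1 - m)) +
      (c - 3) * (c ^ 2 - 8 * c + 11) / (4 * (c - 1) ^ 3) =
      (4 * (c - 3) * m + (c - 3) * (c ^ 2 - 8 * c + 11) * (1 - m)) /
        ((1 - m) * (4 * (c - 1) ^ 3)) := by
    field_simp
  rw [hgoal, le_div_iff₀ hD]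
  nlinarith [mul_nonneg ht (sq_nonneg ((c - 1) * m - (c - 2)))]
end

section
/- Let n ≥ k ≥ 3 be integers and let D be a loopless digraph on n vertices containing no transitive tournament on k vertices. Then the number of arcs of D is at most ((k-2)/(k-1))·n^2. -/
open Finset

private lemma key_aux (m : ℕ) : ∀ {V : Type*} [Fintype V] [DecidableEq V]
    (D : V → V → Prop) [DecidableRel D], Irreflexive D → ∀ s : Finset V,
    (¬ ∃ f : Fin (m + 2) → V, Function.Injective f ∧ (∀ i, f i ∈ s) ∧
      ∀ i j : Fin (m + 2), i < j → D (f i) (f j)) →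
    (((s ×ˢ s).filter fun p : V × V => D p.1 p.2).card : ℝ) ≤
      (m : ℝ) / ((m : ℝ) + 1) * (s.card : ℝ) ^ 2 := by
  induction m with
  | zero =>
    intro V _ _ D _ hirr s hfree
    have h0 : ((s ×ˢ s).filter fun p : V × V => D p.1 p.2) = ∅ := by
      by_contra h
      obtain ⟨p, hp⟩ := Finset.nonempty_iff_ne_empty.mpr h
      rw [Finset.mem_filter, Finset.mem_product] at hp
      obtain ⟨⟨h1, h2⟩, hD⟩ := hp
      have hne : p.1 ≠ p.2 := by
        rintro he; exact hirr p.1 (by rw [← he] at hD; exact hD)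
      apply hfree
      refine ⟨![p.1, p.2], ?_, ?_, ?_⟩
      · intro i j hij
        fin_cases i <;> fin_cases j <;> simp_all
      · intro i; fin_cases i <;> simpa
      · intro i j hij
        fin_cases i <;> fin_cases j <;> simp_all
    simp [h0]
  | succ m ih =>
    intro V _ _ D _ hirr s hfree
    rcases s.eq_empty_or_nonempty with rfl | hs
    · simp
    obtain ⟨v, hv, hmax⟩ := s.exists_max_image (fun u => (s.filter fun w => D u w).card) hs
    set A := s.filter (fun w => D v w) with hA
    have hAs : A ⊆ s := filter_subset _ _
    have hvA : v ∉ A := by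
      simp only [hA, mem_filter]
      rintro ⟨-, hd⟩; exact hirr v hd
    have han : A.card ≤ s.card := card_le_card hAs
    -- freeness of A
    have hfreeA : ¬ ∃ f : Fin (m + 2) → V, Function.Injective f ∧ (∀ i, f i ∈ A) ∧
        ∀ i j : Fin (m + 2), i < j → D (f i) (f j) := by
      rintro ⟨f, hfi, hfA, hft⟩
      apply hfree
      refine ⟨Fin.cons v f, ?_, ?_, ?_⟩
      · rw [Fin.cons_injective_iff]
        refine ⟨?_, hfi⟩
        rintro ⟨i, hi⟩
        exact hvA (hi ▸ hfA i)
      · intro i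
        refine Fin.cases ?_ (fun j => ?_) i
        · simpa using hv
        · simpa using hAs (hfA j)
      · intro i j
        refine Fin.cases ?_ (fun j' => ?_) j
        · intro hij; exact absurd hij (Fin.not_lt_zero i)
        · refine Fin.cases ?_ (fun i' => ?_) i
          · intro _
            simp only [Fin.cons_zero, Fin.cons_succ]
            exact (mem_filter.mp (hfA j')).2
          · intro hij'
            simp only [Fin.cons_succ]
            exact hft i' j' (by simpa [Fin.succ_lt_succ_iff] using hij')
    have hEA := ih D hirr A hfreeA
    -- counting
    have hsum : ∀ (t u : Finset V), ((t ×ˢ u).filter fun p : V × V => D p.1 p.2).card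
        = ∑ x ∈ t, (u.filter fun w => D x w).card := by
      intro t u
      rw [Finset.card_filter, Finset.sum_product]
      exact Finset.sum_congr rfl fun x _ => (Finset.card_filter _ _).symm
    have h1 : ∀ u ∈ A, (s.filter fun w => D u w).card ≤
        (A.filter fun w => D u w).card + (s.card - A.card) := by
      intro u _
      have hsub : s.filter (fun w => D u w) ⊆ (A.filter fun w => D u w) ∪ (s \ A) := by
        intro w hw
        rw [mem_filter] at hw
        rw [mem_union, mem_filter, mem_sdiff]
        by_cases hwA : w ∈ A
        · exact Or.inl ⟨hwA, hw.2⟩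
        · exact Or.inr ⟨hw.1, hwA⟩
      calc (s.filter fun w => D u w).card
          ≤ ((A.filter fun w => D u w) ∪ (s \ A)).card := card_le_card hsub
        _ ≤ (A.filter fun w => D u w).card + (s \ A).card := card_union_le _ _
        _ = (A.filter fun w => D u w).card + (s.card - A.card) := by
            rw [card_sdiff_of_subset hAs]
    have hN : ((s ×ˢ s).filter fun p : V × V => D p.1 p.2).card ≤
        ((A ×ˢ A).filter fun p : V × V => D p.1 p.2).card
          + A.card * (s.card - A.card) + (s.card - A.card) * A.card := by
      rw [hsum s s, hsum A A]
      have hsplit : ∑ u ∈ s, (s.filter fun w => D u w).card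
          = ∑ u ∈ s \ A, (s.filter fun w => D u w).card
            + ∑ u ∈ A, (s.filter fun w => D u w).card := (Finset.sum_sdiff hAs).symm
      rw [hsplit]
      have hb1 : ∑ u ∈ A, (s.filter fun w => D u w).card ≤
          (∑ u ∈ A, (A.filter fun w => D u w).card) + A.card * (s.card - A.card) := by
        calc ∑ u ∈ A, (s.filter fun w => D u w).card
            ≤ ∑ u ∈ A, ((A.filter fun w => D u w).card + (s.card - A.card)) :=
              Finset.sum_le_sum h1
          _ = (∑ u ∈ A, (A.filter fun w => D u w).card) + A.card * (s.card - A.card) := by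
              rw [Finset.sum_add_distrib, Finset.sum_const, smul_eq_mul]
      have hb2 : ∑ u ∈ s \ A, (s.filter fun w => D u w).card ≤ (s.card - A.card) * A.card := by
        calc ∑ u ∈ s \ A, (s.filter fun w => D u w).card
            ≤ ∑ _u ∈ s \ A, A.card := Finset.sum_le_sum fun u hu =>
              hmax u (mem_sdiff.mp hu).1
          _ = (s.card - A.card) * A.card := by
              rw [Finset.sum_const, smul_eq_mul, card_sdiff_of_subset hAs]
      omega
    -- cast to ℝ
    set x : ℝ := (((s ×ˢ s).filter fun p : V × V => D p.1 p.2).card : ℝ) with hxdef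
    set y : ℝ := (((A ×ˢ A).filter fun p : V × V => D p.1 p.2).card : ℝ) with hydef
    have hx : x ≤ y + (A.card : ℝ) * ((s.card : ℝ) - A.card)
        + ((s.card : ℝ) - A.card) * A.card := by
      have := (Nat.cast_le (α := ℝ)).mpr hN
      push_cast [Nat.cast_sub han] at this
      convert this using 2 <;> push_cast <;> ring
    have ha' : (0 : ℝ) ≤ (A.card : ℝ) := by positivity
    have hn' : (A.card : ℝ) ≤ (s.card : ℝ) := by exact_mod_cast han
    have hm1 : (0 : ℝ) < (m : ℝ) + 1 := by positivity
    have hm2 : (0 : ℝ) < (m : ℝ) + 2 := by positivity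
    have hy' : ((m : ℝ) + 1) * y ≤ (m : ℝ) * (A.card : ℝ) ^ 2 := by
      rw [div_mul_eq_mul_div, le_div_iff₀ hm1] at hEA
      linarith [hEA]
    have hmain : ((m : ℝ) + 1) * (((m : ℝ) + 2) * x) ≤
        ((m : ℝ) + 1) * (((m : ℝ) + 1) * (s.card : ℝ) ^ 2) := by
      nlinarith [sq_nonneg (((m : ℝ) + 1) * (s.card : ℝ) - ((m : ℝ) + 2) * (A.card : ℝ)),
        mul_le_mul_of_nonneg_left hx (le_of_lt (mul_pos hm1 hm2)),
        mul_le_mul_of_nonneg_left hy' (le_of_lt hm2)]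
    have hfin : ((m : ℝ) + 2) * x ≤ ((m : ℝ) + 1) * (s.card : ℝ) ^ 2 :=
      le_of_mul_le_mul_left hmain hm1
    have : ((m + 1 : ℕ) : ℝ) / (((m + 1 : ℕ) : ℝ) + 1) * (s.card : ℝ) ^ 2
        = ((m : ℝ) + 1) * (s.card : ℝ) ^ 2 / ((m : ℝ) + 2) := by
      push_cast; ring
    rw [this, le_div_iff₀ hm2]
    linarith [hfin, mul_comm x ((m : ℝ) + 2)]

open Finset in
theorem stmt_12 {V : Type*} [Fintype V] [DecidableEq V] (k : ℕ) (hk : 3 ≤ k)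
    (hn : k ≤ Fintype.card V)
    (D : V → V → Prop) [DecidableRel D] (hirr : Irreflexive D)
    (hfree : ¬ ∃ f : Fin k → V, Function.Injective f ∧ ∀ i j : Fin k, i < j → D (f i) (f j)) :
    ((univ.filter fun p : V × V => D p.1 p.2).card : ℝ) ≤
      ((k : ℝ) - 2) / ((k : ℝ) - 1) * (Fintype.card V : ℝ) ^ 2 := by
  obtain ⟨m, rfl⟩ : ∃ m, k = m + 2 := ⟨k - 2, by omega⟩
  have h := key_aux m D hirr univ (by
    rintro ⟨f, h1, -, h3⟩
    exact hfree ⟨f, h1, h3⟩)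
  rw [Finset.univ_product_univ, Finset.card_univ] at h
  refine h.trans_eq ?_
  have h2 : ((m + 2 : ℕ) : ℝ) - 2 = (m : ℝ) := by push_cast; ring
  have h3 : ((m + 2 : ℕ) : ℝ) - 1 = (m : ℝ) + 1 := by push_cast; ring
  rw [h2, h3]
end

section
/- Let C be a finite nonempty set of colors, A ⊆ C × C × C, and define the palette P = (C, A). Suppose P is S_k-bad for some k ≥ 3, meaning: there is no linear order ≼ on the vertex set of the k-star S_k together with a function φ from the 2-element subsets of V(S_k) to C such that every edge {u,v,w} of S_k with u ≺ v ≺ w satisfies (φ({u,v}), φ({u,w}), φ({v,w})) ∈ A. Then the auxiliary digraph D_P contains no loops. -/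
/-- The palette `(C, A)` is `S_k`-good: there is a linear order on the `k+1` vertices of the
`k`-star (encoded as `Fin (k+1)`, with the center being `0` and the leaves `1, …, k`, and with
edges `{0, a, b}` for distinct nonzero `a, b`), given by an equivalence `σ` to `Fin (k+1)`,
and a coloring `φ` of the pairs of vertices, such that every edge, listed in increasing order
`u ≺ v ≺ w`, has `(φ u v, φ u w, φ v w) ∈ A`. -/
def SkGood (k : ℕ) {C : Type*} (A : Set (C × C × C)) : Prop :=
  ∃ (σ : Fin (k + 1) ≃ Fin (k + 1)) (φ : Fin (k + 1) → Fin (k + 1) → C),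
    (∀ u v, φ u v = φ v u) ∧
    ∀ u v w : Fin (k + 1),
      (∃ a b : Fin (k + 1), a ≠ 0 ∧ b ≠ 0 ∧ a ≠ b ∧
        ({u, v, w} : Finset (Fin (k + 1))) = {0, a, b}) →
      σ u < σ v → σ v < σ w → (φ u v, φ u w, φ v w) ∈ A

/-- The auxiliary digraph of the palette `(C, A)`, on two disjoint copies of `C`:
`a¹ → b¹` iff `(a,b)` is `(2,3)`-admissible, `a² → b²` iff `(a,b)` is `(1,2)`-admissible,
and both arcs between `a¹` and `b²` iff `(a,b)` is `(1,3)`-admissible. -/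
def AuxArc {C : Type*} (A : Set (C × C × C)) : C ⊕ C → C ⊕ C → Prop
  | .inl a, .inl b => ∃ t ∈ A, t.2.1 = a ∧ t.2.2 = b
  | .inr a, .inr b => ∃ t ∈ A, t.1 = a ∧ t.2.1 = b
  | .inl a, .inr b => ∃ t ∈ A, t.1 = a ∧ t.2.2 = b
  | .inr b, .inl a => ∃ t ∈ A, t.1 = a ∧ t.2.2 = b

theorem stmt_13 {C : Type*} [Fintype C] [Nonempty C] (k : ℕ) (hk : 3 ≤ k)
    (A : Set (C × C × C)) (hbad : ¬ SkGood k A) :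
    Irreflexive (AuxArc A) := by
  intro x hx
  apply hbad
  cases x with
  | inl a =>
    obtain ⟨⟨c1, c2, c3⟩, htA, h1, h2⟩ := hx
    dsimp at h1 h2
    subst h1; subst h2
    refine ⟨(finRotate (k+1)).symm, fun x y => if x = 0 ∨ y = 0 then c3 else c1, ?_, ?_⟩
    · intro u v; simp [or_comm]
    · rintro u v w ⟨p, q, hp, hq, hpq, hset⟩ huv hvw
      have h0 : (finRotate (k+1)).symm 0 = Fin.last k := by
        rw [Equiv.symm_apply_eq, finRotate_last]
      have hu : u ≠ 0 := by
        rintro rfl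
        rw [h0] at huv
        exact absurd (huv.trans hvw) (not_lt.mpr (Fin.le_last _))
      have hv : v ≠ 0 := by
        rintro rfl
        rw [h0] at hvw
        exact absurd hvw (not_lt.mpr (Fin.le_last _))
      have hw : w = 0 := by
        have h0mem : (0 : Fin (k+1)) ∈ ({u, v, w} : Finset (Fin (k+1))) := by
          rw [hset]; simp
        simp only [Finset.mem_insert, Finset.mem_singleton] at h0mem
        rcases h0mem with h | h | h
        · exact absurd h.symm hu
        · exact absurd h.symm hv
        · exact h.symm
      subst hw
      dsimp only
      rw [if_neg (by simp [hu, hv]), if_pos (Or.inr rfl), if_pos (Or.inr rfl)]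
      exact htA
  | inr a =>
    obtain ⟨⟨c1, c2, c3⟩, htA, h1, h2⟩ := hx
    dsimp at h1 h2
    subst h1; subst h2
    refine ⟨Equiv.refl _, fun x y => if x = 0 ∨ y = 0 then c2 else c3, ?_, ?_⟩
    · intro u v; simp [or_comm]
    · rintro u v w ⟨p, q, hp, hq, hpq, hset⟩ huv hvw
      simp only [Equiv.refl_apply] at huv hvw
      have hv : v ≠ 0 := by
        rintro rfl
        exact absurd huv (not_lt.mpr (Fin.zero_le _))
      have hw : w ≠ 0 := by
        rintro rfl
        exact absurd hvw (not_lt.mpr (Fin.zero_le _))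
      have hu : u = 0 := by
        have h0mem : (0 : Fin (k+1)) ∈ ({u, v, w} : Finset (Fin (k+1))) := by
          rw [hset]; simp
        simp only [Finset.mem_insert, Finset.mem_singleton] at h0mem
        rcases h0mem with h | h | h
        · exact h.symm
        · exact absurd h.symm hv
        · exact absurd h.symm hw
      subst hu
      dsimp only
      rw [if_pos (Or.inl rfl), if_pos (Or.inl rfl), if_neg (by simp [hv, hw])]
      exact htA
end
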